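/- Let κ be an uncountable regular cardinal. If there exists a cardinal μ < κ with 2^μ = 2^κ, then every non-empty subset of ^κκ is a continuous image of ^κκ. -/

import Mathlib

open Cardinal Set

noncomputable section

namespace GBaire

universe u

/-- The underlying well-ordered set of the cardinal `κ`, i.e. the type of ordinals `< κ`. -/
abbrev K (κ : Cardinal.{u}) : Type u := κ.ord.ToType

/-- The set `^{<κ}κ` of all functions from a proper initial segment of `κ` to `κ`. -/
abbrev PreFun (κ : Cardinal.{u}) : Type u := Σ α : K κ, ({β : K κ // β < α} → K κ)

variable (κ : Cardinal.{u})

/-- The restriction `x ↾ α` of a function `x ∈ ^κκ` to the initial segment determined by `α`. -/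
def resT (x : K κ → K κ) (α : K κ) : PreFun κ := ⟨α, fun β => x β.1⟩

/-- The restriction of `s ∈ ^{<κ}κ` to (the minimum of its domain and) `γ`.  When
`γ ≤ s.1` this is the restriction `s ↾ γ`; otherwise it equals `s`. -/
def cut (s : PreFun κ) (γ : K κ) : PreFun κ :=
  ⟨min γ s.1, fun β => s.2 ⟨β.1, lt_of_lt_of_le β.2 (min_le_right _ _)⟩⟩

/-- A subtree of `^{<κ}κ`: a set of elements of `^{<κ}κ` closed under restrictions
to smaller ordinals. -/
def IsSubtree (T : Set (PreFun κ)) : Prop :=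
  ∀ s ∈ T, ∀ γ : K κ, γ < s.1 → cut κ s γ ∈ T

/-- The `α`-th level `T(α)` of `T`. -/
def level (T : Set (PreFun κ)) (α : K κ) : Set (PreFun κ) := {s ∈ T | s.1 = α}

/-- The set `[T]` of cofinal branches of `T`, i.e. all `x ∈ ^κκ` all of whose
restrictions lie in `T`. -/
def branches (T : Set (PreFun κ)) : Set (K κ → K κ) := {x | ∀ α : K κ, resT κ x α ∈ T}

/-- `T` is a `κ`-Kurepa subtree of `^{<κ}κ`: a subtree all of whose levels are nonempty
of cardinality `< κ` and with at least `κ⁺` many cofinal branches. -/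
def IsKurepa (T : Set (PreFun κ)) : Prop :=
  IsSubtree κ T ∧ (∀ α : K κ, (level κ T α).Nonempty ∧ #(level κ T α) < κ) ∧
    Order.succ κ ≤ #(branches κ T)

/-- The basic open set `N_s = {x ∈ ^κκ | s ⊆ x}`. -/
def Nbhd (s : PreFun κ) : Set (K κ → K κ) := {x | resT κ x s.1 = s}

/-- The topology of the generalized Baire space `^κκ`, generated by the sets `N_s`. -/
def baire : TopologicalSpace (K κ → K κ) :=
  TopologicalSpace.generateFrom {U | ∃ s : PreFun κ, U = Nbhd κ s}

/-- `X` is a continuous image of `^κκ`: there is a continuous surjection from `^κκ`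
onto `X` (with the subspace topology). -/
def IsContImage (X : Set (K κ → K κ)) : Prop :=
  letI := baire κ
  ∃ f : (K κ → K κ) → X, Continuous f ∧ Function.Surjective f

/-- `X` is a retract of `^κκ`: there is a continuous `r : ^κκ → ^κκ` with range
contained in `X` that is the identity on `X`. -/
def IsRetract (X : Set (K κ → K κ)) : Prop :=
  letI := baire κ
  ∃ r : (K κ → K κ) → (K κ → K κ),
    Continuous r ∧ Set.range r ⊆ X ∧ ∀ x ∈ X, r x = x

/-- `y` is an isolated point of `Y ⊆ ^κκ`. -/
def IsIsolatedIn (Y : Set (K κ → K κ)) (y : K κ → K κ) : Prop :=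
  y ∈ Y ∧ ∃ α : K κ, Nbhd κ (resT κ y α) ∩ Y = {y}

/-- `T` is slim: `|T(α)| ≤ |α|` for all sufficiently large `α < κ`. -/
def IsSlim (T : Set (PreFun κ)) : Prop :=
  ∃ α₀ : K κ, ∀ α : K κ, α₀ ≤ α → #(level κ T α) ≤ #{β : K κ // β < α}

/-- `C ⊆ κ` is closed: it contains every least upper bound of a nonempty subset of `C`. -/
def ClosedIn (C : Set (K κ)) : Prop :=
  ∀ A ⊆ C, A.Nonempty → ∀ x : K κ, IsLUB A x → x ∈ C

/-- `C ⊆ κ` is unbounded in `κ`. -/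
def UnboundedIn (C : Set (K κ)) : Prop := ∀ x : K κ, ∃ y ∈ C, x < y

/-- `S ⊆ κ` is stationary in `κ`: it meets every closed unbounded subset of `κ`. -/
def Stationary (S : Set (K κ)) : Prop :=
  ∀ C : Set (K κ), ClosedIn κ C → UnboundedIn κ C → (S ∩ C).Nonempty

/-- `T` is stationary slim: `|T(α)| ≤ |α|` for stationarily many `α < κ`. -/
def StatSlim (T : Set (PreFun κ)) : Prop :=
  Stationary κ {α : K κ | #(level κ T α) ≤ #{β : K κ // β < α}}

/-- `α` is a limit ordinal (as an element of `κ`): it is neither the least element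
nor a successor. -/
def IsLimitElt (α : K κ) : Prop :=
  (∃ β : K κ, β < α) ∧ ∀ β : K κ, β < α → ∃ γ : K κ, β < γ ∧ γ < α

/-- The boundary `∂T` of a subtree `T`: the minimal elements of `^{<κ}κ \ T`. -/
def boundary (T : Set (PreFun κ)) : Set (PreFun κ) :=
  {t | t ∉ T ∧ ∀ γ : K κ, γ < t.1 → cut κ t γ ∈ T}

/-- `T` is superthin: for every limit ordinal `α < κ`, the set of elements of
`T ∪ ∂T` with domain `α` has cardinality `< κ`. -/
def IsSuperthin (T : Set (PreFun κ)) : Prop :=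
  ∀ α : K κ, IsLimitElt κ α → #{s ∈ T ∪ boundary κ T | s.1 = α} < κ

/-- `T` is pruned: every element of `T` has a proper extension in `T`. -/
def IsPruned (T : Set (PreFun κ)) : Prop :=
  ∀ s ∈ T, ∃ t ∈ T, s.1 < t.1 ∧ cut κ t s.1 = s

/-- `T` is `<κ`-closed: the union of every (strictly increasing with respect to proper
end-extension) sequence of elements of `T` indexed by an ordinal `< κ` again lies in `T`.
Here `u` is the union of the sequence `s` iff the domain of `u` is the least upper bound
of the domains of the `s ξ` and every `s ξ` is a restriction of `u`. -/
def IsLtClosed (T : Set (PreFun κ)) : Prop :=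
  ∀ (γ : K κ) (s : {ξ : K κ // ξ < γ} → PreFun κ),
    (∀ ξ ζ : {ξ : K κ // ξ < γ}, ξ < ζ → (s ξ).1 < (s ζ).1 ∧ cut κ (s ζ) (s ξ).1 = s ξ) →
    (∀ ξ, s ξ ∈ T) →
    ∀ u : PreFun κ, IsLUB (Set.range fun ξ => (s ξ).1) u.1 →
      (∀ ξ, cut κ u (s ξ).1 = s ξ) → u ∈ T

/-- `T` contains a Cantor subtree. -/
def HasCantorSubtree (T : Set (PreFun κ)) : Prop :=
  ∃ (l : ℕ → K κ) (lam : K κ), StrictMono l ∧ IsLUB (Set.range l) lam ∧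
    (level κ T lam).Nonempty ∧
    ∃ B ⊆ level κ T lam, ¬ B.Countable ∧
      ∀ n : ℕ, ((fun t => cut κ t (l n)) '' B).Countable

/-- proper end-extension on `^{<κ}κ`. -/
def pext (s t : PreFun κ) : Prop := s.1 < t.1 ∧ cut κ t s.1 = s

/-- A set `A ⊆ ^{<κ}κ`, regarded as a tree under proper end-extension, is trivially
coherent: it is order-isomorphic to a subtree of `^{<λ}2` (for `λ` its height) all of
whose elements `t` satisfy that `t⁻¹{0}` is finite.  (Here the comparison tree is
realized as a subtree `U` of `^{<κ}κ` taking only the values `0` and `1`, i.e. values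
with at most one predecessor, such that each `u ∈ U` takes the value `0`, i.e. the
value with no predecessor, only finitely often.) -/
def TriviallyCoherent (A : Set (PreFun κ)) : Prop :=
  ∃ U : Set (PreFun κ),
    IsSubtree κ U ∧
    (∀ u ∈ U, ∀ β : {b : K κ // b < u.1}, #{γ : K κ // γ < u.2 β} ≤ 1) ∧
    (∀ u ∈ U, {β : {b : K κ // b < u.1} | ¬ ∃ γ : K κ, γ < u.2 β}.Finite) ∧
    ∃ f : A → U, Function.Bijective f ∧
      ∀ s t : A, pext κ s.1 t.1 ↔ pext κ (f s).1 (f t).1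

/-- `T` is locally coherent: each of its proper initial segments `T ∩ ^{<α}κ` is
trivially coherent. -/
def LocallyCoherent (T : Set (PreFun κ)) : Prop :=
  ∀ α : K κ, TriviallyCoherent κ {s ∈ T | s.1 < α}

end GBaire

namespace GBaire

/-! Since `|X| ≤ κ^κ = 2^κ = 2^μ ≤ κ^μ`, the set `X` is the image of `^ακ` for an `α < κ`
of cardinality `μ`. Precomposing with the restriction `x ↦ x ↾ α` gives a surjection from
`^κκ` that is constant on each basic open set `N_{x ↾ α}`, hence continuous whatever
topology `X` carries. -/

variable {κ : Cardinal.{u}}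

theorem exists_mk_Iio_eq {μ : Cardinal.{u}} (hμκ : μ < κ) :
    ∃ α : K κ, #{β : K κ // β < α} = μ := by
  refine ⟨Ordinal.ToType.mk ⟨μ.ord, Set.mem_Iio.2 (ord_lt_ord.2 hμκ)⟩, ?_⟩
  rw [← Ordinal.card_typein, ← Ordinal.ToType.mk_symm_apply_coe]
  simp

theorem power_self_le_power_of_two_power_eq {μ : Cardinal.{u}} (hκ : ℵ₀ ≤ κ)
    (h2 : (2 : Cardinal.{u}) ^ μ = 2 ^ κ) : κ ^ κ ≤ κ ^ μ :=
  calc κ ^ κ = 2 ^ μ := by rw [power_self_eq hκ, h2]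
    _ ≤ κ ^ μ := power_le_power_right (ofNat_le_aleph0.trans hκ)

theorem resT_eq_resT_iff {x y : K κ → K κ} {α : K κ} :
    resT κ y α = resT κ x α ↔
      y ∘ (Subtype.val : {β : K κ // β < α} → K κ) = x ∘ Subtype.val := by
  simp only [resT, Sigma.mk.inj_iff, heq_iff_eq, true_and]
  rfl

theorem continuous_comp_restrict {Y : Type*} [TopologicalSpace Y] (α : K κ)
    (g : ({β : K κ // β < α} → K κ) → Y) :
    @Continuous _ _ (baire κ) _ fun x => g (x ∘ Subtype.val) := by
  let := baire κ
  refine continuous_def.2 fun U _ => isOpen_iff_forall_mem_open.2 fun x hx => ?_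
  refine ⟨Nbhd κ (resT κ x α), fun y hy => ?_, .basic _ ⟨_, rfl⟩, rfl⟩
  have hyx : y ∘ Subtype.val = x ∘ Subtype.val :=
    resT_eq_resT_iff.1 (show resT κ y α = _ from hy)
  rwa [Set.mem_preimage, hyx]

theorem isContImage_of_mk_le {X : Set (K κ → K κ)} (hX : X.Nonempty) (α : K κ)
    (hcard : #X ≤ κ ^ #{β : K κ // β < α}) : IsContImage κ X := by
  have hle : #X ≤ #({β : K κ // β < α} → K κ) := by simpa [← power_def] using hcard
  obtain ⟨g, hg⟩ : ∃ g : ({β : K κ // β < α} → K κ) → X, g.Surjective :=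
    Function.exists_surjective_iff.2 ⟨⟨fun _ => ⟨_, hX.some_mem⟩⟩, hle⟩
  let := baire κ
  exact ⟨_, continuous_comp_restrict α g,
    hg.comp (Subtype.val_injective.surjective_comp_right' id)⟩

theorem continuous_image_of_two_power_eq_general
    (κ : Cardinal.{u}) (hκ : ℵ₀ < κ)
    (μ : Cardinal.{u}) (hμκ : μ < κ) (h2 : (2 : Cardinal.{u}) ^ μ = 2 ^ κ)
    (X : Set (K κ → K κ)) (hX : X.Nonempty) :
    IsContImage κ X := by
  obtain ⟨α, hα⟩ := exists_mk_Iio_eq hμκ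
  refine isContImage_of_mk_le hX α ?_
  calc #X ≤ #(K κ → K κ) := mk_set_le X
    _ = κ ^ κ := by simp
    _ ≤ κ ^ #{β : K κ // β < α} := hα ▸ power_self_le_power_of_two_power_eq hκ.le h2

/-- Let `κ` be an uncountable regular cardinal.  If there is a
cardinal `μ < κ` with `2^μ = 2^κ`, then every non-empty subset of `^κκ` is a continuous
image of `^κκ`. -/
theorem continuous_image_of_two_power_eq
    (κ : Cardinal.{u}) (hκ : ℵ₀ < κ) (hreg : κ.IsRegular)
    (μ : Cardinal.{u}) (hμκ : μ < κ) (h2 : (2 : Cardinal.{u}) ^ μ = 2 ^ κ)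
    (X : Set (K κ → K κ)) (hX : X.Nonempty) :
    IsContImage κ X :=
  continuous_image_of_two_power_eq_general κ hκ μ hμκ h2 X hX

end GBaire
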